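/- arXiv:2006.09762 — 8 statements merged into one kernel-verified Lean document; each statement's English description precedes it below -/
import Mathlib

section
/- Lemma 1, point 1 (completion of the update plan): after exactly S − k update steps every parameter has been visited by the task, i.e. B (S − k) = Finset.univ, and consequently B c = Finset.univ for every c ≥ S − k. -/
/-- Lemma 1, point 1 (completion of the update plan): after exactly `S − k`
update steps every parameter has been visited by the task, and consequently
`B c = Finset.univ` for every `c ≥ S − k`. -/
theorem maximum_roaming_completion
    (S k : ℕ) (hS : 0 < S) (hk : 0 < k) (hkS : k ≤ S)
    (A B : ℕ → Finset (Fin S))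
    (hB : ∀ c, B c = (Finset.range (c + 1)).biUnion A)
    (hA0 : (A 0).card = k)
    (hupd : ∀ c, c < S - k →
      ∃ im ∈ A c, ∃ ip ∉ B c, A (c + 1) = insert ip ((A c).erase im))
    (hfreeze : ∀ c, S - k ≤ c → A (c + 1) = A c) :
    B (S - k) = Finset.univ ∧ ∀ c, S - k ≤ c → B c = Finset.univ := by
  have hmono : ∀ c d, c ≤ d → B c ⊆ B d := by
    intro c d hcd x hx
    rw [hB] at hx ⊢
    simp only [Finset.mem_biUnion, Finset.mem_range] at hx ⊢
    obtain ⟨i, hi, hxi⟩ := hx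
    exact ⟨i, by omega, hxi⟩
  have hmem : ∀ c x, x ∈ A c → x ∈ B c := by
    intro c x hx
    rw [hB]
    exact Finset.mem_biUnion.2 ⟨c, Finset.mem_range.2 (by omega), hx⟩
  have hcard : ∀ c, c ≤ S - k → k + c ≤ (B c).card := by
    intro c
    induction c with
    | zero =>
      intro _
      have h0 : B 0 = A 0 := by rw [hB]; simp
      simp [h0, hA0]
    | succ n ih =>
      intro h
      obtain ⟨im, him, ip, hip, hAn⟩ := hupd n (by omega)
      have h1 : ip ∈ B (n + 1) :=
        hmem _ _ (by rw [hAn]; exact Finset.mem_insert_self _ _)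
      have h2 : insert ip (B n) ⊆ B (n + 1) := by
        intro x hx
        rcases Finset.mem_insert.1 hx with rfl | hx
        · exact h1
        · exact hmono n (n + 1) (by omega) hx
      have h3 : (insert ip (B n)).card = (B n).card + 1 :=
        Finset.card_insert_of_notMem hip
      have h4 := Finset.card_le_card h2
      have h5 := ih (by omega)
      omega
  have huniv : B (S - k) = Finset.univ := by
    apply Finset.eq_univ_of_card
    have h1 := hcard (S - k) le_rfl
    have h2 := Finset.card_le_univ (B (S - k))
    simp only [Fintype.card_fin] at h2 ⊢
    omega
  refine ⟨huniv, fun c hc => ?_⟩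
  apply Finset.eq_univ_of_card
  have h1 := Finset.card_le_card (hmono (S - k) c hc)
  rw [huniv] at h1
  have h2 := Finset.card_le_univ (B c)
  simp only [Fintype.card_fin, Finset.card_univ] at h1 h2 ⊢
  omega
end

section
/- Lemma 1, point 1 (all layers): let D > 0 and for each layer d : Fin D let A_d : ℕ → Finset (Fin (S d)) be a Maximum Roaming update process with initial cardinality k d (each satisfying the single-layer conditions), and let C := max over d of (S d − k d). Then for every layer d and every c ≥ C, the visited set B_d c equals Finset.univ; i.e. the whole update plan across all layers finishes after at most C = max_d (S d − k d) update steps. -/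
/-- Lemma 1, point 1 (all layers): for a network with `D > 0` layers, each
layer `d` running a Maximum Roaming update process with `S d` parameters and
initial partition cardinality `k d`, the whole update plan finishes after at
most `C = max_d (S d − k d)` update steps: for every layer `d` and every
`c ≥ C`, the visited set `B d c` equals `Finset.univ`. -/
theorem maximum_roaming_all_layers_completion
    (D : ℕ) (hD : 0 < D)
    (S k : Fin D → ℕ)
    (hS : ∀ d, 0 < S d) (hk : ∀ d, 0 < k d) (hkS : ∀ d, k d ≤ S d)
    (A B : (d : Fin D) → ℕ → Finset (Fin (S d)))
    (hB : ∀ d c, B d c = (Finset.range (c + 1)).biUnion (A d))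
    (hA0 : ∀ d, (A d 0).card = k d)
    (hupd : ∀ d c, c < S d - k d →
      ∃ im ∈ A d c, ∃ ip ∉ B d c, A d (c + 1) = insert ip ((A d c).erase im))
    (hfreeze : ∀ d c, S d - k d ≤ c → A d (c + 1) = A d c) :
    ∀ d : Fin D, ∀ c, (Finset.univ.sup fun d => S d - k d) ≤ c →
      B d c = Finset.univ := by
  intro d c hc
  have hmono : ∀ c₁ c₂ : ℕ, c₁ ≤ c₂ → B d c₁ ⊆ B d c₂ := by
    intro c₁ c₂ h
    rw [hB, hB]
    exact Finset.biUnion_subset_biUnion_of_subset_left _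
      (Finset.range_subset_range.mpr (by omega))
  have hAsubB : ∀ c, A d c ⊆ B d c := by
    intro c
    rw [hB]
    exact Finset.subset_biUnion_of_mem _ (Finset.self_mem_range_succ c)
  have hcard : ∀ c, c ≤ S d - k d → (B d c).card = k d + c := by
    intro c
    induction c with
    | zero =>
      intro _
      have : B d 0 = A d 0 := by
        rw [hB]; simp
      rw [this, hA0]; omega
    | succ n ih =>
      intro hn
      obtain ⟨im, him, ip, hip, hA⟩ := hupd d n (by omega)
      have hstep : B d (n + 1) = insert ip (B d n) := by
        apply Finset.Subset.antisymm
        · rw [hB d (n + 1)]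
          apply Finset.biUnion_subset.mpr
          intro i hi
          rw [Finset.mem_range] at hi
          rcases Nat.lt_succ_iff_lt_or_eq.mp (by omega : i < n + 2) with h | h
          · exact fun x hx => Finset.mem_insert_of_mem
              ((hAsubB i).trans (hmono i n (by omega)) hx)
          · subst h
            rw [hA]
            intro x hx
            rcases Finset.mem_insert.mp hx with h' | h'
            · exact Finset.mem_insert.mpr (Or.inl h')
            · exact Finset.mem_insert_of_mem
                ((hAsubB n) (Finset.mem_of_mem_erase h'))
        · intro x hx
          rcases Finset.mem_insert.mp hx with h' | h'
          · subst h'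
            exact (hAsubB (n + 1)) (by rw [hA]; exact Finset.mem_insert_self _ _)
          · exact hmono n (n + 1) (by omega) h'
      rw [hstep, Finset.card_insert_of_notMem hip, ih (by omega)]; omega
  have hfull : B d (S d - k d) = Finset.univ := by
    apply Finset.eq_univ_of_card
    rw [hcard _ le_rfl, Fintype.card_fin]
    have := hkS d
    omega
  have hCd : S d - k d ≤ c :=
    le_trans (Finset.le_sup (f := fun d => S d - k d) (Finset.mem_univ d)) hc
  exact Finset.univ_subset_iff.mp (hfull ▸ hmono _ _ hCd)
end

section
/- Lemma 2 (inductive step, preservation of the partition marginal): for every parameter i : Fin S, if the probability under μ that i belongs to the first component A equals k/S, and the probability under μ that i belongs to the second component B equals (k + c)/S, then the probability under the updated distribution ν that i belongs to the updated partition A' = insert i₊ (A.erase i₋) equals k/S. -/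
/-!
Given `(A, B)`, the index `i` lands in `A' = insert i₊ (A.erase i₋)` either because `i ∈ A` and
`i₋ ≠ i` (probability `(k - 1)/k`) or because `i ∉ B` and `i₊ = i` (probability `1/(S - k - c)`);
the two events are disjoint since `i₊ ∉ B ⊇ A`. Averaging over `μ` gives
`(k - 1)/k · k/S + 1/(S - k - c) · (S - k - c)/S = k/S`.
-/

/-- One Maximum Roaming update step as a (probability) kernel: given a pair
`(A, B)` of a task partition and a visited set, sample `im` uniformly from `A`
and `ip` uniformly from the complement `Bᶜ`, and form
`(insert ip (A.erase im), insert ip B)`.  (On degenerate pairs, where `A` or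
`Bᶜ` is empty — which never happens on the support of the distributions
considered — it acts as the identity.) -/
noncomputable def mrStep (S : ℕ) (AB : Finset (Fin S) × Finset (Fin S)) :
    PMF (Finset (Fin S) × Finset (Fin S)) :=
  if h : AB.1.Nonempty ∧ (AB.2ᶜ).Nonempty then
    (PMF.uniformOfFinset AB.1 h.1).bind fun im =>
      (PMF.uniformOfFinset AB.2ᶜ h.2).map fun ip =>
        (insert ip (AB.1.erase im), insert ip AB.2)
  else PMF.pure AB

open Finset
open scoped ENNReal

theorem ENNReal.div_mul_div_cancel (a c : ℝ≥0∞) {b : ℝ≥0∞} (hb₀ : b ≠ 0) (hb : b ≠ ∞) :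
    a / b * (b / c) = a / c := by
  rw [← mul_div_assoc, ENNReal.div_mul_cancel hb₀ hb]

namespace PMF

variable {α β : Type*}

theorem toOuterMeasure_add_toOuterMeasure_compl (p : PMF α) (s : Set α) :
    p.toOuterMeasure s + p.toOuterMeasure sᶜ = 1 := by
  rw [toOuterMeasure_apply, toOuterMeasure_apply, ← ENNReal.tsum_add]
  simp only [Set.indicator_self_add_compl_apply, p.tsum_coe]

theorem tsum_mul_indicator_const (p : PMF α) (s : Set α) (x : ℝ≥0∞) :
    ∑' a, p a * s.indicator (fun _ => x) a = x * p.toOuterMeasure s := by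
  rw [toOuterMeasure_apply, ← ENNReal.tsum_mul_left]
  refine tsum_congr fun a => ?_
  by_cases ha : a ∈ s <;> simp [ha, mul_comm]

theorem toOuterMeasure_bind_apply_of_eq_indicator_add_indicator {p : PMF α} {f : α → PMF β}
    {s : Set β} {t u : Set α} {x y : ℝ≥0∞}
    (hf : ∀ a ∈ p.support,
      (f a).toOuterMeasure s = t.indicator (fun _ => x) a + u.indicator (fun _ => y) a) :
    (p.bind f).toOuterMeasure s = x * p.toOuterMeasure t + y * p.toOuterMeasure u := by
  have hterm : ∀ a, p a * (f a).toOuterMeasure s =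
      p a * t.indicator (fun _ => x) a + p a * u.indicator (fun _ => y) a := by
    intro a
    by_cases ha : a ∈ p.support
    · rw [hf a ha, mul_add]
    · simp [(p.apply_eq_zero_iff a).mpr ha]
  rw [toOuterMeasure_bind_apply, tsum_congr hterm, ENNReal.tsum_add,
    tsum_mul_indicator_const, tsum_mul_indicator_const]

theorem toOuterMeasure_uniformOfFinset_mem_erase [DecidableEq α] {s : Finset α}
    (hs : s.Nonempty) (i : α) :
    (uniformOfFinset s hs).toOuterMeasure {a | i ∈ s.erase a} =
      if i ∈ s then ((#s - 1 : ℕ) : ℝ≥0∞) / #s else 0 := by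
  rw [toOuterMeasure_uniformOfFinset_apply]
  split_ifs with hi
  · rw [← card_erase_of_mem hi]
    congr 3
    ext a
    simp only [mem_filter, Set.mem_ofPred_eq, mem_erase]
    grind
  · rw [ENNReal.div_eq_zero_iff, Nat.cast_eq_zero, card_eq_zero]
    left
    ext a
    simp only [mem_filter, Set.mem_ofPred_eq, mem_erase, notMem_empty, iff_false]
    grind

end PMF

open PMF

theorem mrStep_toOuterMeasure_mem_fst {S : ℕ} {A B : Finset (Fin S)} (hAB : A ⊆ B)
    (hA : A.Nonempty) (hB : Bᶜ.Nonempty) (i : Fin S) :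
    (mrStep S (A, B)).toOuterMeasure {p | i ∈ p.1} =
      (uniformOfFinset A hA).toOuterMeasure {a | i ∈ A.erase a} + uniformOfFinset Bᶜ hB i := by
  have hinner : ∀ a, (uniformOfFinset Bᶜ hB).toOuterMeasure {b | i ∈ insert b (A.erase a)} =
      {a | i ∈ A.erase a}.indicator (fun _ => 1) a + uniformOfFinset Bᶜ hB i := by
    intro a
    by_cases ha : i ∈ A.erase a
    · have hiB : i ∉ Bᶜ := fun h => mem_compl.mp h (hAB (mem_of_mem_erase ha))
      rw [uniformOfFinset_apply_of_notMem hB hiB, add_zero,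
        Set.indicator_of_mem (s := {a | i ∈ A.erase a}) ha, toOuterMeasure_apply_eq_one_iff]
      exact fun b _ => mem_insert_of_mem ha
    · have : {b | i ∈ insert b (A.erase a)} = {i} := by
        ext b; simp [ha, eq_comm]
      rw [this, Set.indicator_of_notMem (s := {a | i ∈ A.erase a}) ha, zero_add,
        toOuterMeasure_apply_singleton]
  rw [mrStep, dif_pos ⟨hA, hB⟩, toOuterMeasure_bind_apply]
  simp only [toOuterMeasure_map_apply, Set.preimage_ofPred_eq, hinner, mul_add]
  rw [ENNReal.tsum_add, tsum_mul_indicator_const, one_mul, ENNReal.tsum_mul_right, tsum_coe,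
    one_mul]

/-- Lemma 2 (inductive step, preservation of the partition marginal): if under
`μ` the probability that `i ∈ A` equals `k/S` and the probability that
`i ∈ B` equals `(k+c)/S`, then under the updated distribution
`ν = μ.bind (mrStep S)` the probability that `i` belongs to the updated
partition `A' = insert ip (A.erase im)` equals `k/S`. -/
theorem maximum_roaming_marginal_preserved
    (S k c : ℕ) (hk : 0 < k) (hkcS : k + c < S)
    (μ : PMF (Finset (Fin S) × Finset (Fin S)))
    (hsupp : ∀ AB ∈ μ.support, AB.1 ⊆ AB.2 ∧ AB.1.card = k ∧ AB.2.card = k + c)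
    (i : Fin S)
    (hA : μ.toOuterMeasure {p | i ∈ p.1} = (k : ENNReal) / (S : ENNReal))
    (hB : μ.toOuterMeasure {p | i ∈ p.2} = ((k + c : ℕ) : ENNReal) / (S : ENNReal)) :
    (μ.bind (mrStep S)).toOuterMeasure {p | i ∈ p.1} = (k : ENNReal) / (S : ENNReal) := by
  have hstep : ∀ AB ∈ μ.support, (mrStep S AB).toOuterMeasure {p | i ∈ p.1} =
      {p | i ∈ p.1}.indicator (fun _ => ((k - 1 : ℕ) : ℝ≥0∞) / k) AB +
        {p | i ∈ p.2}ᶜ.indicator (fun _ => 1 / ((S - (k + c) : ℕ) : ℝ≥0∞)) AB := by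
    rintro ⟨A, B⟩ hAB
    obtain ⟨hsub, hcardA, hcardB⟩ : A ⊆ B ∧ #A = k ∧ #B = k + c := hsupp _ hAB
    have hcardBc : #Bᶜ = S - (k + c) := by rw [card_compl, Fintype.card_fin, hcardB]
    rw [mrStep_toOuterMeasure_mem_fst hsub (card_pos.mp (by omega)) (card_pos.mp (by omega)),
      toOuterMeasure_uniformOfFinset_mem_erase, uniformOfFinset_apply, hcardA, hcardBc]
    simp [Set.indicator_apply]
  have hS : (S : ℝ≥0∞) ≠ 0 := by exact_mod_cast (by omega : S ≠ 0)
  have hBc : μ.toOuterMeasure {p | i ∈ p.2}ᶜ = ((S - (k + c) : ℕ) : ℝ≥0∞) / S := by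
    have htotal := μ.toOuterMeasure_add_toOuterMeasure_compl {p | i ∈ p.2}
    rw [hB, add_comm] at htotal
    rw [ENNReal.eq_sub_of_add_eq' ENNReal.one_ne_top htotal, ENNReal.natCast_sub,
      ENNReal.sub_div fun _ _ => hS, ENNReal.div_self hS (ENNReal.natCast_ne_top S)]
  rw [toOuterMeasure_bind_apply_of_eq_indicator_add_indicator hstep, hA, hBc,
    ENNReal.div_mul_div_cancel _ _ (by exact_mod_cast hk.ne') (ENNReal.natCast_ne_top k),
    ENNReal.div_mul_div_cancel _ _ (by exact_mod_cast (by omega : S - (k + c) ≠ 0))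
      (ENNReal.natCast_ne_top _), ENNReal.div_add_div_same]
  congr 1
  exact_mod_cast Nat.sub_add_cancel hk
end

section
/- Intermediate equation in the proof of Lemma 2 (first term): for every parameter i : Fin S, if the probability under μ that i belongs to the first component A equals k/S, then the probability (under μ together with the uniform choices of i₋ and i₊) of the joint event that i ∈ A and i belongs to the updated partition A' = insert i₊ (A.erase i₋) equals k/S − 1/S. -/
lemma mrStep_measure_aux (S k c : ℕ) (hk : 0 < k) (hkcS : k + c < S)
    (A B : Finset (Fin S)) (hAB : A ⊆ B) (hAc : A.card = k) (hBc : B.card = k + c)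
    (i : Fin S) (hi : i ∈ A) :
    (mrStep S (A, B)).toOuterMeasure {AB' | i ∈ AB'.1}
      = ((k - 1 : ℕ) : ENNReal) / (k : ENNReal) := by
  have hAne : A.Nonempty := ⟨i, hi⟩
  have hBcne : (Bᶜ : Finset (Fin S)).Nonempty := by
    rw [← Finset.card_pos, Finset.card_compl, Fintype.card_fin, hBc]
    omega
  have hiB : i ∈ B := hAB hi
  rw [mrStep, dif_pos ⟨hAne, hBcne⟩, PMF.toOuterMeasure_bind_apply]
  have key : ∀ im : Fin S,
      ((PMF.uniformOfFinset (Bᶜ) hBcne).map fun ip =>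
          (insert ip (A.erase im), insert ip B)).toOuterMeasure {AB' | i ∈ AB'.1}
        = if im = i then 0 else 1 := by
    intro im
    by_cases him : im = i
    · rw [if_pos him, PMF.toOuterMeasure_apply_eq_zero_iff, PMF.support_map,
        PMF.support_uniformOfFinset, Set.disjoint_left]
      rintro AB' ⟨ip, hip, rfl⟩ hmem
      simp only [Set.mem_setOf_eq, Finset.mem_insert, Finset.mem_erase] at hmem
      rcases hmem with h | h
      · exact (Finset.mem_compl.1 (by simpa using hip)) (h ▸ hiB)
      · exact h.1 him.symm
    · rw [if_neg him, PMF.toOuterMeasure_apply_eq_one_iff, PMF.support_map,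
        PMF.support_uniformOfFinset]
      rintro AB' ⟨ip, hip, rfl⟩
      simp only [Set.mem_setOf_eq, Finset.mem_insert, Finset.mem_erase]
      exact Or.inr ⟨fun h => him h.symm, hi⟩
  calc (∑' im, (PMF.uniformOfFinset A hAne) im *
        ((PMF.uniformOfFinset (Bᶜ) hBcne).map fun ip =>
          (insert ip (A.erase im), insert ip B)).toOuterMeasure {AB' | i ∈ AB'.1})
      = ∑ im : Fin S, (PMF.uniformOfFinset A hAne) im * (if im = i then 0 else 1) := by
        rw [tsum_fintype]
        exact Finset.sum_congr rfl fun im _ => by rw [key im]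
    _ = ∑ im : Fin S, (if im ∈ A.erase i then (k : ENNReal)⁻¹ else 0) := by
        refine Finset.sum_congr rfl fun im _ => ?_
        rw [PMF.uniformOfFinset_apply, hAc]
        by_cases him : im = i
        · simp [him]
        · by_cases himA : im ∈ A <;> simp [him, himA]
    _ = ((k - 1 : ℕ) : ENNReal) / (k : ENNReal) := by
        rw [Finset.sum_ite_mem, Finset.univ_inter, Finset.sum_const,
          Finset.card_erase_of_mem hi, hAc, nsmul_eq_mul, div_eq_mul_inv]

/-- Intermediate equation in the proof of Lemma 2 (first term): if under `μ`
the probability that `i ∈ A` equals `k/S`, then — jointly over the draw of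
`(A, B)` from `μ` and the uniform choices of `im` and `ip` — the probability
of the event that `i ∈ A` and `i` belongs to the updated partition
`A' = insert ip (A.erase im)` equals `k/S − 1/S`. -/
theorem maximum_roaming_first_term
    (S k c : ℕ) (hk : 0 < k) (hkcS : k + c < S)
    (μ : PMF (Finset (Fin S) × Finset (Fin S)))
    (hsupp : ∀ AB ∈ μ.support, AB.1 ⊆ AB.2 ∧ AB.1.card = k ∧ AB.2.card = k + c)
    (i : Fin S)
    (hA : μ.toOuterMeasure {p | i ∈ p.1} = (k : ENNReal) / (S : ENNReal)) :
    (μ.bind fun AB => (mrStep S AB).map fun AB' => (AB, AB')).toOuterMeasure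
        {q | i ∈ q.1.1 ∧ i ∈ q.2.1}
      = (k : ENNReal) / (S : ENNReal) - 1 / (S : ENNReal) := by
  have hk0 : (k : ENNReal) ≠ 0 := by exact_mod_cast hk.ne'
  have hkt : (k : ENNReal) ≠ ⊤ := ENNReal.natCast_ne_top k
  rw [PMF.toOuterMeasure_bind_apply]
  have step : ∀ AB, μ AB *
      ((mrStep S AB).map fun AB' => (AB, AB')).toOuterMeasure {q | i ∈ q.1.1 ∧ i ∈ q.2.1}
      = ((k - 1 : ℕ) : ENNReal) / (k : ENNReal) *
        ({p : Finset (Fin S) × Finset (Fin S) | i ∈ p.1}.indicator (⇑μ) AB) := by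
    intro AB
    rw [PMF.toOuterMeasure_map_apply]
    by_cases hiA : i ∈ AB.1
    · have hpre : ((fun AB' : Finset (Fin S) × Finset (Fin S) => (AB, AB')) ⁻¹' {q | i ∈ q.1.1 ∧ i ∈ q.2.1})
          = {AB' | i ∈ AB'.1} := by
        ext AB'; simp [hiA]
      rw [hpre]
      simp only [Set.indicator_apply, Set.mem_setOf_eq, hiA, if_true]
      by_cases hμ : μ AB = 0
      · simp [hμ]
      · obtain ⟨h1, h2, h3⟩ := hsupp AB (PMF.mem_support_iff μ AB |>.2 hμ)
        rw [show AB = (AB.1, AB.2) from rfl] at *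
        rw [mrStep_measure_aux S k c hk hkcS AB.1 AB.2 h1 h2 h3 i hiA, mul_comm]
    · have hpre : ((fun AB' : Finset (Fin S) × Finset (Fin S) => (AB, AB')) ⁻¹' {q | i ∈ q.1.1 ∧ i ∈ q.2.1}) = ∅ := by
        ext AB'; simp [hiA]
      rw [hpre]
      simp only [Set.indicator_apply, Set.mem_setOf_eq, hiA, if_false]
      simp
  calc (∑' AB, μ AB *
        ((mrStep S AB).map fun AB' => (AB, AB')).toOuterMeasure {q | i ∈ q.1.1 ∧ i ∈ q.2.1})
      = ((k - 1 : ℕ) : ENNReal) / (k : ENNReal) *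
          ∑' AB, ({p : Finset (Fin S) × Finset (Fin S) | i ∈ p.1}.indicator (⇑μ) AB) := by
        rw [← ENNReal.tsum_mul_left]
        exact tsum_congr step
    _ = ((k - 1 : ℕ) : ENNReal) / (k : ENNReal) * ((k : ENNReal) / (S : ENNReal)) := by
        rw [← PMF.toOuterMeasure_apply, hA]
    _ = ((k - 1 : ℕ) : ENNReal) / (S : ENNReal) := by
        rw [div_eq_mul_inv, div_eq_mul_inv, div_eq_mul_inv, mul_assoc,
          ← mul_assoc (k : ENNReal)⁻¹, ENNReal.inv_mul_cancel hk0 hkt, one_mul]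
    _ = (k : ENNReal) / (S : ENNReal) - 1 / (S : ENNReal) := by
        rw [ENNReal.natCast_sub, Nat.cast_one, ENNReal.sub_div fun _ _ => ?_]
        exact Nat.cast_ne_zero.2 (by omega)
end

section
/- Intermediate equation in the proof of Lemma 2 (second term): for every parameter i : Fin S, if the probability under μ that i belongs to the second component B equals (k + c)/S, then the probability (under μ together with the uniform choices of i₋ and i₊) of the joint event that i ∉ A and i belongs to the updated partition A' = insert i₊ (A.erase i₋) equals 1/S. -/
/-- Intermediate equation in the proof of Lemma 2 (second term): if under `μ`
the probability that `i ∈ B` equals `(k+c)/S`, then — jointly over the draw of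
`(A, B)` from `μ` and the uniform choices of `im` and `ip` — the probability
of the event that `i ∉ A` and `i` belongs to the updated partition
`A' = insert ip (A.erase im)` equals `1/S`. -/
theorem maximum_roaming_second_term
    (S k c : ℕ) (hk : 0 < k) (hkcS : k + c < S)
    (μ : PMF (Finset (Fin S) × Finset (Fin S)))
    (hsupp : ∀ AB ∈ μ.support, AB.1 ⊆ AB.2 ∧ AB.1.card = k ∧ AB.2.card = k + c)
    (i : Fin S)
    (hB : μ.toOuterMeasure {p | i ∈ p.2} = ((k + c : ℕ) : ENNReal) / (S : ENNReal)) :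
    (μ.bind fun AB => (mrStep S AB).map fun AB' => (AB, AB')).toOuterMeasure
        {q | i ∉ q.1.1 ∧ i ∈ q.2.1}
      = 1 / (S : ENNReal) := by
  classical
  set r : ENNReal := ((S - (k + c) : ℕ) : ENNReal)⁻¹ with hr
  have hSsub : S - (k + c) ≠ 0 := Nat.sub_ne_zero_of_lt hkcS
  rw [PMF.toOuterMeasure_bind_apply]
  have hpt : ∀ AB : Finset (Fin S) × Finset (Fin S),
      μ AB * ((mrStep S AB).map (fun AB' => (AB, AB'))).toOuterMeasure
        {q : (Finset (Fin S) × Finset (Fin S)) × (Finset (Fin S) × Finset (Fin S)) |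
          i ∉ q.1.1 ∧ i ∈ q.2.1}
      = r * Set.indicator {p : Finset (Fin S) × Finset (Fin S) | i ∉ p.2} (⇑μ) AB := by
    intro AB
    by_cases hμ : μ AB = 0
    · rw [hμ]
      simp [Set.indicator_apply, hμ]
    · obtain ⟨hAB, hA, hBc⟩ := hsupp AB (by simpa [PMF.mem_support_iff] using hμ)
      have hAne : AB.1.Nonempty := Finset.card_pos.mp (hA ▸ hk)
      have hBcne : (AB.2ᶜ).Nonempty := by
        rw [← Finset.card_pos, Finset.card_compl, hBc, Fintype.card_fin]
        omega
      rw [PMF.toOuterMeasure_map_apply]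
      by_cases hiA : i ∈ AB.1
      · have hiB : i ∈ AB.2 := hAB hiA
        have hpre : ((fun AB' => (AB, AB')) ⁻¹'
            {q : (Finset (Fin S) × Finset (Fin S)) × (Finset (Fin S) × Finset (Fin S)) |
              i ∉ q.1.1 ∧ i ∈ q.2.1}) = ∅ := by
          ext AB'
          simp [hiA]
        rw [hpre]
        simp [Set.indicator_apply, hiB]
      · have hpre : ((fun AB' => (AB, AB')) ⁻¹'
            {q : (Finset (Fin S) × Finset (Fin S)) × (Finset (Fin S) × Finset (Fin S)) |
              i ∉ q.1.1 ∧ i ∈ q.2.1}) = {p | i ∈ p.1} := by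
          ext AB'
          simp [hiA]
        rw [hpre, mrStep, dif_pos ⟨hAne, hBcne⟩, PMF.toOuterMeasure_bind_apply]
        have hinner : ∀ im : Finset (Fin S) × Finset (Fin S) → Prop, True := fun _ => trivial
        have hval : ∀ im : Fin S,
            ((PMF.uniformOfFinset AB.2ᶜ hBcne).map
              (fun ip => (insert ip (AB.1.erase im), insert ip AB.2))).toOuterMeasure
              {p : Finset (Fin S) × Finset (Fin S) | i ∈ p.1}
            = (if i ∈ AB.2 then 0 else r) := by
          intro im
          rw [PMF.toOuterMeasure_map_apply]
          have hpre2 : ((fun ip => (insert ip (AB.1.erase im), insert ip AB.2)) ⁻¹'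
              {p : Finset (Fin S) × Finset (Fin S) | i ∈ p.1}) = {i} := by
            ext ip
            simp only [Set.mem_preimage, Set.mem_setOf_eq, Finset.mem_insert,
              Set.mem_singleton_iff]
            constructor
            · rintro (h | h)
              · exact h.symm
              · exact absurd (Finset.mem_of_mem_erase h) hiA
            · rintro rfl; exact Or.inl rfl
          rw [hpre2, PMF.toOuterMeasure_apply_singleton, PMF.uniformOfFinset_apply]
          have hcard : (AB.2ᶜ).card = S - (k + c) := by
            rw [Finset.card_compl, hBc, Fintype.card_fin]
          by_cases hiB : i ∈ AB.2
          · simp [Finset.mem_compl, hiB]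
          · simp [Finset.mem_compl, hiB, hcard, hr]
        simp_rw [hval]
        rw [ENNReal.tsum_mul_right, PMF.tsum_coe, one_mul]
        by_cases hiB : i ∈ AB.2
        · simp [Set.indicator_apply, hiB]
        · simp [Set.indicator_apply, hiB, mul_comm]
  simp_rw [hpt]
  rw [ENNReal.tsum_mul_left, ← PMF.toOuterMeasure_apply]
  have hcompl : μ.toOuterMeasure {p : Finset (Fin S) × Finset (Fin S) | i ∉ p.2}
      = ((S - (k + c) : ℕ) : ENNReal) / (S : ENNReal) := by
    have hsplit : μ.toOuterMeasure {p : Finset (Fin S) × Finset (Fin S) | i ∈ p.2}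
        + μ.toOuterMeasure {p : Finset (Fin S) × Finset (Fin S) | i ∉ p.2} = 1 := by
      rw [PMF.toOuterMeasure_apply, PMF.toOuterMeasure_apply, ← ENNReal.tsum_add]
      rw [← PMF.tsum_coe μ]
      congr 1
      funext p
      by_cases h : i ∈ p.2 <;> simp [Set.indicator_apply, h]
    have hsum : ((k + c : ℕ) : ENNReal) / (S : ENNReal)
        + ((S - (k + c) : ℕ) : ENNReal) / (S : ENNReal) = 1 := by
      rw [ENNReal.div_add_div_same]
      have : ((k + c : ℕ) : ENNReal) + ((S - (k + c) : ℕ) : ENNReal) = (S : ENNReal) := by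
        rw [← Nat.cast_add]
        congr 1
        omega
      rw [this, ENNReal.div_self (by exact_mod_cast (by omega : S ≠ 0)) (by simp)]
    rw [hB] at hsplit
    have := hsplit.trans hsum.symm
    exact (ENNReal.add_right_inj (by
      refine ne_of_lt (lt_of_le_of_lt (ENNReal.div_le_of_le_mul ?_) ENNReal.one_lt_top)
      · simp
        exact_mod_cast (by omega : k + c ≤ S))).mp this
  rw [hcompl, hr]
  rw [ENNReal.div_eq_inv_mul, ← mul_assoc, mul_right_comm, ENNReal.inv_mul_cancel
    (by exact_mod_cast hSsub) (by simp), one_mul, one_div]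
end

section
/- One-step growth of the visited-set marginal: for every parameter i : Fin S, if the probability under μ that i belongs to the second component B equals (k + c)/S, then the probability under the updated distribution ν that i belongs to the updated visited set B' = insert i₊ B equals (k + c + 1)/S. -/
/-- One-step growth of the visited-set marginal: if under `μ` the probability
that `i ∈ B` equals `(k+c)/S`, then under the updated distribution
`ν = μ.bind (mrStep S)` the probability that `i` belongs to the updated
visited set `B' = insert ip B` equals `(k+c+1)/S`. -/
theorem maximum_roaming_visited_marginal_grows
    (S k c : ℕ) (hk : 0 < k) (hkcS : k + c < S)
    (μ : PMF (Finset (Fin S) × Finset (Fin S)))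
    (hsupp : ∀ AB ∈ μ.support, AB.1 ⊆ AB.2 ∧ AB.1.card = k ∧ AB.2.card = k + c)
    (i : Fin S)
    (hB : μ.toOuterMeasure {p | i ∈ p.2} = ((k + c : ℕ) : ENNReal) / (S : ENNReal)) :
    (μ.bind (mrStep S)).toOuterMeasure {p | i ∈ p.2}
      = ((k + c + 1 : ℕ) : ENNReal) / (S : ENNReal) := by
  classical
  set m := k + c with hm
  set d := S - m with hd
  have hdpos : 0 < d := Nat.sub_pos_of_lt hkcS
  have hSpos : 0 < S := lt_of_le_of_lt (Nat.zero_le _) hkcS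
  have hS0 : (S : ENNReal) ≠ 0 := by exact_mod_cast hSpos.ne'
  have hStop : (S : ENNReal) ≠ ⊤ := ENNReal.natCast_ne_top S
  have hd0 : (d : ENNReal) ≠ 0 := by exact_mod_cast hdpos.ne'
  have hdtop : (d : ENNReal) ≠ ⊤ := ENNReal.natCast_ne_top d
  -- key computation for each AB in the support
  have key : ∀ AB ∈ μ.support,
      (mrStep S AB).toOuterMeasure {p | i ∈ p.2}
        = if i ∈ AB.2 then 1 else ((d : ℕ) : ENNReal)⁻¹ := by
    intro AB hAB
    obtain ⟨hsub, hA, hBc⟩ := hsupp AB hAB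
    have hAne : AB.1.Nonempty := Finset.card_pos.mp (by rw [hA]; exact hk)
    have hcomplcard : AB.2ᶜ.card = d := by
      rw [Finset.card_compl, hBc, Fintype.card_fin]
    have hcompl : AB.2ᶜ.Nonempty := Finset.card_pos.mp (by rw [hcomplcard]; exact hdpos)
    rw [mrStep, dif_pos ⟨hAne, hcompl⟩, PMF.toOuterMeasure_bind_apply]
    have hinner : ∀ im : Fin S, ((PMF.uniformOfFinset AB.2ᶜ hcompl).map
        fun ip => (insert ip (AB.1.erase im), insert ip AB.2)).toOuterMeasure {p | i ∈ p.2}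
        = if i ∈ AB.2 then 1 else ((d : ℕ) : ENNReal)⁻¹ := by
      intro im
      rw [PMF.toOuterMeasure_map_apply, PMF.toOuterMeasure_uniformOfFinset_apply]
      by_cases hiB : i ∈ AB.2
      · have hfilt : AB.2ᶜ.filter (fun ip => ip ∈ ((fun ip => (insert ip (AB.1.erase im),
            insert ip AB.2)) ⁻¹' {p | i ∈ p.2})) = AB.2ᶜ := by
          apply Finset.filter_true_of_mem
          intro x _
          simp [Set.mem_preimage, Finset.mem_insert, hiB]
        rw [hfilt, if_pos hiB, ENNReal.div_self]
        · simpa [hcomplcard] using hd0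
        · exact ENNReal.natCast_ne_top _
      · have hfilt : AB.2ᶜ.filter (fun ip => ip ∈ ((fun ip => (insert ip (AB.1.erase im),
            insert ip AB.2)) ⁻¹' {p | i ∈ p.2})) = {i} := by
          ext x
          simp only [Finset.mem_filter, Set.mem_preimage, Set.mem_setOf_eq,
            Finset.mem_insert, Finset.mem_singleton, Finset.mem_compl]
          constructor
          · rintro ⟨hx, h | h⟩
            · exact h.symm
            · exact absurd h hiB
          · rintro rfl
            exact ⟨hiB, Or.inl rfl⟩
        rw [hfilt, if_neg hiB, hcomplcard]
        simp [ENNReal.div_eq_inv_mul]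
    calc (∑' im, (PMF.uniformOfFinset AB.1 hAne) im *
            ((PMF.uniformOfFinset AB.2ᶜ hcompl).map
              fun ip => (insert ip (AB.1.erase im), insert ip AB.2)).toOuterMeasure
                {p | i ∈ p.2})
        = ∑' im, (PMF.uniformOfFinset AB.1 hAne) im *
            (if i ∈ AB.2 then 1 else ((d : ℕ) : ENNReal)⁻¹) := by
          exact tsum_congr fun im => by rw [hinner im]
      _ = (∑' im, (PMF.uniformOfFinset AB.1 hAne) im) *
            (if i ∈ AB.2 then 1 else ((d : ℕ) : ENNReal)⁻¹) := ENNReal.tsum_mul_right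
      _ = _ := by rw [PMF.tsum_coe, one_mul]
  -- expand the bind
  rw [PMF.toOuterMeasure_bind_apply]
  have hsum : (∑' AB, μ AB * (mrStep S AB).toOuterMeasure {p | i ∈ p.2})
      = ∑' AB : Finset (Fin S) × Finset (Fin S),
          ((if i ∈ AB.2 then μ AB else 0) +
            (if i ∈ AB.2 then 0 else μ AB * ((d : ℕ) : ENNReal)⁻¹)) := by
    refine tsum_congr fun AB => ?_
    by_cases hAB : AB ∈ μ.support
    · rw [key AB hAB]
      by_cases hiB : i ∈ AB.2 <;> simp [hiB]
    · have : μ AB = 0 := by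
        simpa [PMF.mem_support_iff] using hAB
      simp [this]
  rw [hsum, ENNReal.tsum_add]
  have h1 : (∑' AB : Finset (Fin S) × Finset (Fin S), (if i ∈ AB.2 then μ AB else 0))
      = ((m : ℕ) : ENNReal) / S := by
    rw [← hB, PMF.toOuterMeasure_apply]
    exact tsum_congr fun AB => by rw [Set.indicator_apply]; rfl
  have h2 : (∑' AB : Finset (Fin S) × Finset (Fin S), (if i ∈ AB.2 then 0 else μ AB))
      = ((d : ℕ) : ENNReal) / S := by
    have hadd : ((m : ℕ) : ENNReal) / S
          + (∑' AB : Finset (Fin S) × Finset (Fin S), (if i ∈ AB.2 then 0 else μ AB)) = 1 := by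
      rw [← h1, ← ENNReal.tsum_add]
      rw [← PMF.tsum_coe μ]
      exact tsum_congr fun AB => by by_cases hiB : i ∈ AB.2 <;> simp [hiB]
    have hadd' : ((m : ℕ) : ENNReal) / S + ((d : ℕ) : ENNReal) / S = 1 := by
      rw [ENNReal.div_add_div_same, ← Nat.cast_add]
      have : m + d = S := by omega
      rw [this, ENNReal.div_self hS0 hStop]
    have hfin : ((m : ℕ) : ENNReal) / S ≠ ⊤ :=
      (ENNReal.div_lt_top (ENNReal.natCast_ne_top m) hS0).ne
    exact WithTop.add_left_cancel hfin (hadd.trans hadd'.symm)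
  rw [h1]
  calc ((m : ℕ) : ENNReal) / S
        + ∑' AB : Finset (Fin S) × Finset (Fin S), (if i ∈ AB.2 then 0 else μ AB * ((d : ℕ) : ENNReal)⁻¹)
      = ((m : ℕ) : ENNReal) / S
        + (∑' AB : Finset (Fin S) × Finset (Fin S), (if i ∈ AB.2 then 0 else μ AB)) * ((d : ℕ) : ENNReal)⁻¹ := by
        rw [← ENNReal.tsum_mul_right]
        congr 1
        exact tsum_congr fun AB => by by_cases hiB : i ∈ AB.2 <;> simp [hiB]
    _ = ((m : ℕ) : ENNReal) / S + ((d : ℕ) : ENNReal) / S * ((d : ℕ) : ENNReal)⁻¹ := by rw [h2]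
    _ = ((m : ℕ) : ENNReal) / S + (S : ENNReal)⁻¹ := by
        congr 1
        rw [ENNReal.div_eq_inv_mul, mul_assoc, ENNReal.mul_inv_cancel hd0 hdtop, mul_one]
    _ = ((k + c + 1 : ℕ) : ENNReal) / S := by
        rw [← one_div, ENNReal.div_add_div_same]
        congr 1
        push_cast
        rw [hm]
        push_cast
        ring
end

section
/- Lemma 2 (constant inclusion probability along the whole update plan): for every step c ≤ S − k and every parameter i : Fin S, the probability under μ c that i belongs to the first component (the task partition A) equals k/S; in particular the marginal probability that any given parameter is used by the task, and hence the average overlap between the parameter partitions of different tasks, remains constant over the whole update plan. -/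
lemma mrStep_fst (S : ℕ) (i : Fin S) (A B : Finset (Fin S))
    (hAB : A ⊆ B) (hA : A.Nonempty) (hB : Bᶜ.Nonempty) :
    (mrStep S (A, B)).toOuterMeasure {p | i ∈ p.1} =
      (if i ∈ A then ((A.card - 1 : ℕ) : ENNReal) / (A.card : ENNReal) else 0) +
      (if i ∈ B then 0 else ((Bᶜ.card : ℕ) : ENNReal)⁻¹) := by
  classical
  have hBcard : ((Bᶜ.card : ℕ) : ENNReal) ≠ 0 := by
    simpa using Finset.card_ne_zero_of_mem hB.choose_spec
  have hstep : mrStep S (A, B) = (PMF.uniformOfFinset A hA).bind fun im =>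
      (PMF.uniformOfFinset Bᶜ hB).map fun ip => (insert ip (A.erase im), insert ip B) := by
    rw [mrStep, dif_pos ⟨hA, hB⟩]
  rw [hstep, PMF.toOuterMeasure_bind_apply]
  by_cases hiA : i ∈ A
  · have hiB : i ∈ B := hAB hiA
    have key : ∀ im : Fin S, (PMF.uniformOfFinset A hA) im *
        ((PMF.uniformOfFinset Bᶜ hB).map fun ip =>
          (insert ip (A.erase im), insert ip B)).toOuterMeasure {p | i ∈ p.1}
        = if im ∈ A.erase i then ((A.card : ℕ) : ENNReal)⁻¹ else 0 := by
      intro im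
      rw [PMF.toOuterMeasure_map_apply, PMF.toOuterMeasure_uniformOfFinset_apply]
      by_cases him : im ∈ A.erase i
      · have h1 : im ∈ A := Finset.mem_of_mem_erase him
        have h2 : im ≠ i := Finset.ne_of_mem_erase him
        have hfilt : Bᶜ.filter (· ∈ (fun ip => (insert ip (A.erase im), insert ip B)) ⁻¹' {p | i ∈ p.1}) = Bᶜ := by
          apply Finset.filter_true_of_mem
          intro x hx
          simp [Set.mem_preimage, Finset.mem_insert, Finset.mem_erase, hiA, Ne.symm h2]
        rw [hfilt, ENNReal.div_self hBcard (ENNReal.natCast_ne_top _),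
          PMF.uniformOfFinset_apply_of_mem _ h1, if_pos him, mul_one]
      · by_cases h1 : im ∈ A
        · have h2 : im = i := by
            by_contra hne
            exact him (Finset.mem_erase.mpr ⟨hne, h1⟩)
          have hfilt : Bᶜ.filter (· ∈ (fun ip => (insert ip (A.erase im), insert ip B)) ⁻¹' {p | i ∈ p.1}) = ∅ := by
            apply Finset.filter_false_of_mem
            intro x hx
            simp only [Set.mem_preimage, Set.mem_setOf_eq, Finset.mem_insert, Finset.mem_erase, h2]
            push_neg
            constructor
            · rintro rfl; exact (Finset.mem_compl.mp hx) hiB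
            · intro h; exact absurd rfl h
          rw [hfilt, if_neg him]
          simp
        · rw [PMF.uniformOfFinset_apply_of_notMem _ h1, if_neg him, zero_mul]
    rw [tsum_congr key, tsum_eq_sum (s := A.erase i) (fun b hb => if_neg hb)]
    rw [Finset.sum_congr rfl (fun x hx => if_pos hx), Finset.sum_const,
      Finset.card_erase_of_mem hiA, nsmul_eq_mul]
    rw [if_pos hiA, if_pos hiB, add_zero, div_eq_mul_inv]
  · have key : ∀ im : Fin S, (PMF.uniformOfFinset A hA) im *
        ((PMF.uniformOfFinset Bᶜ hB).map fun ip =>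
          (insert ip (A.erase im), insert ip B)).toOuterMeasure {p | i ∈ p.1}
        = (PMF.uniformOfFinset A hA) im *
          (if i ∈ B then 0 else ((Bᶜ.card : ℕ) : ENNReal)⁻¹) := by
      intro im
      congr 1
      rw [PMF.toOuterMeasure_map_apply, PMF.toOuterMeasure_uniformOfFinset_apply]
      by_cases hiB : i ∈ B
      · have hfilt : Bᶜ.filter (· ∈ (fun ip => (insert ip (A.erase im), insert ip B)) ⁻¹' {p | i ∈ p.1}) = ∅ := by
          apply Finset.filter_false_of_mem
          intro x hx
          simp only [Set.mem_preimage, Set.mem_setOf_eq, Finset.mem_insert, Finset.mem_erase]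
          push_neg
          refine ⟨?_, fun _ => hiA⟩
          rintro rfl; exact (Finset.mem_compl.mp hx) hiB
        rw [hfilt, if_pos hiB]
        simp
      · have hfilt : Bᶜ.filter (· ∈ (fun ip => (insert ip (A.erase im), insert ip B)) ⁻¹' {p | i ∈ p.1}) = {i} := by
          ext x
          simp only [Finset.mem_filter, Set.mem_preimage, Set.mem_setOf_eq, Finset.mem_insert,
            Finset.mem_erase, Finset.mem_compl, Finset.mem_singleton]
          constructor
          · rintro ⟨hx, hi | ⟨_, hi⟩⟩
            · exact hi.symm
            · exact absurd hi hiA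
          · rintro rfl; exact ⟨hiB, Or.inl rfl⟩
        rw [hfilt, if_neg hiB, Finset.card_singleton, Nat.cast_one, one_div]
    rw [tsum_congr key, ENNReal.tsum_mul_right, PMF.tsum_coe, one_mul, if_neg hiA, zero_add]

lemma mrStep_snd (S : ℕ) (i : Fin S) (A B : Finset (Fin S))
    (hA : A.Nonempty) (hB : Bᶜ.Nonempty) :
    (mrStep S (A, B)).toOuterMeasure {p | i ∉ p.2} =
      if i ∈ B then 0 else ((Bᶜ.card - 1 : ℕ) : ENNReal) / (Bᶜ.card : ENNReal) := by
  classical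
  have hstep : mrStep S (A, B) = (PMF.uniformOfFinset A hA).bind fun im =>
      (PMF.uniformOfFinset Bᶜ hB).map fun ip => (insert ip (A.erase im), insert ip B) := by
    rw [mrStep, dif_pos ⟨hA, hB⟩]
  rw [hstep, PMF.toOuterMeasure_bind_apply]
  have key : ∀ im : Fin S, (PMF.uniformOfFinset A hA) im *
      ((PMF.uniformOfFinset Bᶜ hB).map fun ip =>
        (insert ip (A.erase im), insert ip B)).toOuterMeasure {p | i ∉ p.2}
      = (PMF.uniformOfFinset A hA) im *
        (if i ∈ B then 0 else ((Bᶜ.card - 1 : ℕ) : ENNReal) / (Bᶜ.card : ENNReal)) := by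
    intro im
    congr 1
    rw [PMF.toOuterMeasure_map_apply, PMF.toOuterMeasure_uniformOfFinset_apply]
    by_cases hiB : i ∈ B
    · have hfilt : Bᶜ.filter (· ∈ (fun ip => (insert ip (A.erase im), insert ip B)) ⁻¹' {p | i ∉ p.2}) = ∅ := by
        apply Finset.filter_false_of_mem
        intro x hx
        simp [Set.mem_preimage, Finset.mem_insert, hiB]
      rw [hfilt, if_pos hiB]
      simp
    · have hfilt : Bᶜ.filter (· ∈ (fun ip => (insert ip (A.erase im), insert ip B)) ⁻¹' {p | i ∉ p.2}) = Bᶜ.erase i := by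
        ext x
        simp only [Finset.mem_filter, Set.mem_preimage, Set.mem_setOf_eq, Finset.mem_insert,
          Finset.mem_erase, Finset.mem_compl, not_or]
        constructor
        · rintro ⟨hx, hne, _⟩
          exact ⟨fun h => hne h.symm, hx⟩
        · rintro ⟨hne, hx⟩
          exact ⟨hx, fun h => hne h.symm, hiB⟩
      rw [hfilt, if_neg hiB, Finset.card_erase_of_mem (Finset.mem_compl.mpr hiB)]
  rw [tsum_congr key, ENNReal.tsum_mul_right, PMF.tsum_coe, one_mul]

lemma enn_div_mul_div (a b s : ℕ) (hb : b ≠ 0) :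
    ((a : ENNReal) / b) * ((b : ENNReal) / s) = (a : ENNReal) / s := by
  have h1 : (b : ENNReal) ≠ 0 := by exact_mod_cast hb
  rw [div_eq_mul_inv, div_eq_mul_inv, div_eq_mul_inv,
    show (a : ENNReal) * (b : ENNReal)⁻¹ * ((b : ENNReal) * (s : ENNReal)⁻¹)
      = (a : ENNReal) * ((b : ENNReal)⁻¹ * (b : ENNReal)) * (s : ENNReal)⁻¹ by ring,
    ENNReal.inv_mul_cancel h1 (ENNReal.natCast_ne_top b), mul_one]


/-- Lemma 2 (constant inclusion probability along the whole update plan):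
for every step `c ≤ S − k` and every parameter `i`, the probability under
`μ c` that `i` belongs to the task partition `A` equals `k/S`; hence the
marginal probability that any given parameter is used by the task (and so the
average overlap between the parameter partitions of different tasks) remains
constant over the whole update plan. -/
theorem maximum_roaming_constant_inclusion_probability
    (S k : ℕ) (hk : 0 < k) (hkS : k ≤ S)
    (μ : ℕ → PMF (Finset (Fin S) × Finset (Fin S)))
    (hsupp : ∀ c ≤ S - k, ∀ AB ∈ (μ c).support,
      AB.1 ⊆ AB.2 ∧ AB.1.card = k ∧ AB.2.card = k + c)
    (h0supp : ∀ AB ∈ (μ 0).support, AB.2 = AB.1)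
    (h0 : ∀ i : Fin S,
      (μ 0).toOuterMeasure {p | i ∈ p.1} = (k : ENNReal) / (S : ENNReal))
    (hrec : ∀ c, c + 1 ≤ S - k → μ (c + 1) = (μ c).bind (mrStep S)) :
    ∀ c ≤ S - k, ∀ i : Fin S,
      (μ c).toOuterMeasure {p | i ∈ p.1} = (k : ENNReal) / (S : ENNReal) := by
  have hS0 : (S : ENNReal) ≠ 0 := by
    have : 0 < S := lt_of_lt_of_le hk hkS
    exact_mod_cast this.ne'
  have main : ∀ c ≤ S - k, ∀ i : Fin S,
      (μ c).toOuterMeasure {p | i ∈ p.1} = (k : ENNReal) / (S : ENNReal) ∧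
      (μ c).toOuterMeasure {p | i ∉ p.2} = ((S - (k + c) : ℕ) : ENNReal) / (S : ENNReal) := by
    intro c
    induction c with
    | zero =>
      intro _ i
      refine ⟨h0 i, ?_⟩
      have e1 : (μ 0).toOuterMeasure {p | i ∉ p.2} = (μ 0).toOuterMeasure {p | i ∉ p.1} := by
        rw [PMF.toOuterMeasure_apply, PMF.toOuterMeasure_apply]
        refine tsum_congr fun AB => ?_
        by_cases h : AB ∈ (μ 0).support
        · simp [Set.indicator_apply, h0supp AB h]
        · have hz : (μ 0) AB = 0 := by simpa [PMF.mem_support_iff] using h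
          simp [Set.indicator_apply, hz]
      have hcompl : (μ 0).toOuterMeasure {p | i ∉ p.1} + (μ 0).toOuterMeasure {p | i ∈ p.1} = 1 := by
        rw [PMF.toOuterMeasure_apply, PMF.toOuterMeasure_apply, ← ENNReal.tsum_add,
          ← PMF.tsum_coe (μ 0)]
        refine tsum_congr fun AB => ?_
        by_cases h : i ∈ AB.1 <;> simp [Set.indicator_apply, h]
      rw [h0 i] at hcompl
      have h2 : ((S - (k + 0) : ℕ) : ENNReal) / (S : ENNReal) + (k : ENNReal) / S = 1 := by
        rw [ENNReal.div_add_div_same,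
          show ((S - (k + 0) : ℕ) : ENNReal) + (k : ENNReal) = (S : ENNReal) by
            exact_mod_cast congrArg (Nat.cast (R := ENNReal)) (by omega),
          ENNReal.div_self hS0 (ENNReal.natCast_ne_top S)]
      rw [e1]
      have hfin : (k : ENNReal) / S ≠ ⊤ :=
        (ENNReal.div_lt_top (ENNReal.natCast_ne_top k) hS0).ne
      exact WithTop.add_right_cancel hfin (hcompl.trans h2.symm)
    | succ c ih =>
      intro hc i
      have hc' : c ≤ S - k := le_of_lt (Nat.lt_of_succ_le hc)
      obtain ⟨ihA, ihB⟩ := ih hc' i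
      have hlt : k + c < S := by omega
      set α := ((k - 1 : ℕ) : ENNReal) / (k : ENNReal) with hα
      set β := (((S - (k + c)) : ℕ) : ENNReal)⁻¹ with hβ
      set γ := ((S - (k + c) - 1 : ℕ) : ENNReal) / (((S - (k + c)) : ℕ) : ENNReal) with hγ
      have hfacts : ∀ AB ∈ (μ c).support, AB.1 ⊆ AB.2 ∧ AB.1.Nonempty ∧ AB.2ᶜ.Nonempty
          ∧ AB.1.card = k ∧ AB.2ᶜ.card = S - (k + c) := by
        intro AB h
        obtain ⟨hsub, hcA, hcB⟩ := hsupp c hc' AB h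
        have hcc : AB.2ᶜ.card = S - (k + c) := by
          rw [Finset.card_compl, hcB, Fintype.card_fin]
        exact ⟨hsub, Finset.card_pos.mp (hcA ▸ hk),
          Finset.card_pos.mp (by omega), hcA, hcc⟩
      constructor
      · rw [hrec c hc, PMF.toOuterMeasure_bind_apply]
        have hterm : ∀ AB, (μ c) AB * (mrStep S AB).toOuterMeasure {p | i ∈ p.1}
            = α * Set.indicator {p | i ∈ p.1} (μ c) AB
              + β * Set.indicator {p | i ∉ p.2} (μ c) AB := by
          intro AB
          by_cases h : AB ∈ (μ c).support
          · obtain ⟨hsub, hAne, hBne, hcA, hcB⟩ := hfacts AB h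
            have := mrStep_fst S i AB.1 AB.2 hsub hAne hBne
            rw [Prod.mk.eta] at this
            rw [this, hcA, hcB, ← hα, ← hβ]
            by_cases h1 : i ∈ AB.1
            · have h2 : i ∈ AB.2 := hsub h1
              simp only [Set.indicator_apply, Set.mem_setOf_eq, h1, h2, if_pos, if_neg,
                not_true, if_false]
              simp [h1, h2]
              ring
            · by_cases h2 : i ∈ AB.2
              · simp [Set.indicator_apply, h1, h2]
              · simp [Set.indicator_apply, h1, h2]
                ring
          · have hz : (μ c) AB = 0 := by simpa [PMF.mem_support_iff] using h
            simp [hz, Set.indicator_apply]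
        rw [tsum_congr hterm, ENNReal.tsum_add, ENNReal.tsum_mul_left, ENNReal.tsum_mul_left,
          ← PMF.toOuterMeasure_apply, ← PMF.toOuterMeasure_apply, ihA, ihB]
        have e1 : α * ((k : ENNReal) / S) = ((k - 1 : ℕ) : ENNReal) / S :=
          enn_div_mul_div (k - 1) k S hk.ne'
        have e2 : β * (((S - (k + c) : ℕ) : ENNReal) / S) = ((1 : ℕ) : ENNReal) / S := by
          rw [hβ, ← one_div, show ((1 : ENNReal)) = ((1 : ℕ) : ENNReal) by simp]
          exact enn_div_mul_div 1 (S - (k + c)) S (by omega)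
        rw [e1, e2, ENNReal.div_add_div_same]
        congr 1
        exact_mod_cast congrArg (Nat.cast (R := ENNReal)) (by omega : (k - 1) + 1 = k)
      · rw [hrec c hc, PMF.toOuterMeasure_bind_apply]
        have hterm : ∀ AB, (μ c) AB * (mrStep S AB).toOuterMeasure {p | i ∉ p.2}
            = γ * Set.indicator {p | i ∉ p.2} (μ c) AB := by
          intro AB
          by_cases h : AB ∈ (μ c).support
          · obtain ⟨hsub, hAne, hBne, hcA, hcB⟩ := hfacts AB h
            have := mrStep_snd S i AB.1 AB.2 hAne hBne
            rw [Prod.mk.eta] at this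
            rw [this, hcB, ← hγ]
            by_cases h2 : i ∈ AB.2
            · simp [Set.indicator_apply, h2]
            · simp [Set.indicator_apply, h2, mul_comm]
          · have hz : (μ c) AB = 0 := by simpa [PMF.mem_support_iff] using h
            simp [hz, Set.indicator_apply]
        rw [tsum_congr hterm, ENNReal.tsum_mul_left, ← PMF.toOuterMeasure_apply, ihB, hγ,
          enn_div_mul_div (S - (k + c) - 1) (S - (k + c)) S (by omega)]
        congr 1
  intro c hc i
  exact (main c hc i).1
end

section
/- Equation (4) of the paper: for every step c ≤ S − k and every parameter i : Fin S, the probability under μ c that i belongs to the second component (the visited set B, i.e. that i has been used by the task at some point during the first c update steps) equals (k + c)/S; equivalently, with sharing ratio p = k/S and update ratio r(c) = c/((1 − p)·S), this probability equals p + (1 − p)·r(c). -/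
lemma mrStep_measure (S : ℕ) (i : Fin S) (AB : Finset (Fin S) × Finset (Fin S))
    (hA : AB.1.Nonempty) (hB : AB.2.card < S) :
    (mrStep S AB).toOuterMeasure {p | i ∈ p.2}
      = if i ∈ AB.2 then 1 else (((S - AB.2.card : ℕ) : ENNReal))⁻¹ := by
  have hcards : (AB.2ᶜ).card = S - AB.2.card := by
    simp [Finset.card_compl]
  have hBc : (AB.2ᶜ).Nonempty := by
    rw [← Finset.card_pos, hcards]
    omega
  rw [mrStep, dif_pos ⟨hA, hBc⟩, PMF.toOuterMeasure_bind_apply]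
  have hconst : ∀ im : Fin S,
      ((PMF.uniformOfFinset AB.2ᶜ hBc).map fun ip =>
        (insert ip (AB.1.erase im), insert ip AB.2)).toOuterMeasure {p | i ∈ p.2}
      = if i ∈ AB.2 then 1 else (((S - AB.2.card : ℕ) : ENNReal))⁻¹ := by
    intro im
    rw [PMF.toOuterMeasure_map_apply]
    by_cases hi : i ∈ AB.2
    · have : ((fun ip : Fin S => (insert ip (AB.1.erase im), insert ip AB.2)) ⁻¹'
          {p | i ∈ p.2}) = Set.univ := by
        ext ip; simp [hi]
      rw [this, if_pos hi, PMF.toOuterMeasure_apply]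
      simp only [Set.indicator_univ]
      exact PMF.tsum_coe _
    · have : ((fun ip : Fin S => (insert ip (AB.1.erase im), insert ip AB.2)) ⁻¹'
          {p | i ∈ p.2}) = {i} := by
        ext ip
        simp only [Set.mem_preimage, Set.mem_setOf_eq, Finset.mem_insert,
          Set.mem_singleton_iff]
        constructor
        · rintro (h | h)
          · exact h.symm
          · exact absurd h hi
        · rintro rfl; exact Or.inl rfl
      rw [this, PMF.toOuterMeasure_apply_singleton, PMF.uniformOfFinset_apply,
        if_pos (by simpa using hi), hcards, if_neg hi]
  calc ∑' im, (PMF.uniformOfFinset AB.1 hA) im *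
        ((PMF.uniformOfFinset AB.2ᶜ hBc).map fun ip =>
          (insert ip (AB.1.erase im), insert ip AB.2)).toOuterMeasure {p | i ∈ p.2}
      = ∑' im, (PMF.uniformOfFinset AB.1 hA) im *
          (if i ∈ AB.2 then 1 else (((S - AB.2.card : ℕ) : ENNReal))⁻¹) := by
        exact tsum_congr fun im => by rw [hconst im]
    _ = _ := by
        rw [ENNReal.tsum_mul_right, PMF.tsum_coe, one_mul]

/-- Equation (4) of the paper: for every step `c ≤ S − k` and every parameter
`i`, the probability under `μ c` that `i` belongs to the visited set `B`
(i.e. that `i` has been used by the task at some point during the first `c`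
update steps) equals `(k + c)/S`; equivalently, with sharing ratio
`p = k/S` and update ratio `r c = c/((1 − p)·S)`, it equals
`p + (1 − p) · r c`. -/
theorem maximum_roaming_visited_probability
    (S k : ℕ) (hk : 0 < k) (hkS : k ≤ S)
    (μ : ℕ → PMF (Finset (Fin S) × Finset (Fin S)))
    (hsupp : ∀ c ≤ S - k, ∀ AB ∈ (μ c).support,
      AB.1 ⊆ AB.2 ∧ AB.1.card = k ∧ AB.2.card = k + c)
    (h0supp : ∀ AB ∈ (μ 0).support, AB.2 = AB.1)
    (h0 : ∀ i : Fin S,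
      (μ 0).toOuterMeasure {p | i ∈ p.1} = (k : ENNReal) / (S : ENNReal))
    (hrec : ∀ c, c + 1 ≤ S - k → μ (c + 1) = (μ c).bind (mrStep S)) :
    ∀ c ≤ S - k, ∀ i : Fin S,
      (μ c).toOuterMeasure {p | i ∈ p.2} = ((k + c : ℕ) : ENNReal) / (S : ENNReal)
      ∧ (μ c).toOuterMeasure {p | i ∈ p.2}
          = (k : ENNReal) / (S : ENNReal)
            + (1 - (k : ENNReal) / (S : ENNReal))
              * ((c : ENNReal) / ((1 - (k : ENNReal) / (S : ENNReal)) * (S : ENNReal))) := by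
  have hS : 0 < S := lt_of_lt_of_le hk hkS
  have hSne : (S : ENNReal) ≠ 0 := by exact_mod_cast hS.ne'
  have hStop : (S : ENNReal) ≠ ⊤ := ENNReal.natCast_ne_top S
  -- general fact: 1 - n/S = (S-n)/S for n ≤ S
  have hsub : ∀ n : ℕ, n ≤ S →
      (1 : ENNReal) - (n : ENNReal) / (S : ENNReal) = ((S - n : ℕ) : ENNReal) / S := by
    intro n hn
    have hadd : ((S - n : ℕ) : ENNReal) / S + (n : ENNReal) / S = 1 := by
      rw [ENNReal.div_add_div_same]
      have : ((S - n : ℕ) : ENNReal) + (n : ℕ) = ((S - n + n : ℕ) : ENNReal) := by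
        push_cast; ring
      rw [this, Nat.sub_add_cancel hn, ENNReal.div_self hSne hStop]
    refine (ENNReal.eq_sub_of_add_eq ?_ hadd).symm
    simp [ENNReal.div_eq_top, hSne, ENNReal.natCast_ne_top]
  -- first conjunct by induction
  have key : ∀ c ≤ S - k, ∀ i : Fin S,
      (μ c).toOuterMeasure {p | i ∈ p.2} = ((k + c : ℕ) : ENNReal) / (S : ENNReal) := by
    intro c
    induction c with
    | zero =>
      intro _ i
      have : (μ 0).toOuterMeasure {p | i ∈ p.2} = (μ 0).toOuterMeasure {p | i ∈ p.1} := by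
        rw [PMF.toOuterMeasure_apply, PMF.toOuterMeasure_apply]
        refine tsum_congr fun AB => ?_
        by_cases hAB : μ 0 AB = 0
        · simp [Set.indicator, hAB]
        · have h2 := h0supp AB hAB
          simp [Set.indicator, h2]
      rw [this, h0 i]
      simp
    | succ c ih =>
      intro hc i
      have hc' : c ≤ S - k := Nat.le_of_succ_le hc
      have hkcS : k + c < S := by omega
      have hμ := hrec c hc
      rw [hμ, PMF.toOuterMeasure_bind_apply]
      set m : ℕ := S - (k + c) with hm
      have hmpos : 0 < m := by omega
      set E : Set (Finset (Fin S) × Finset (Fin S)) := {p | i ∈ p.2} with hE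
      have hpoint : ∀ AB, μ c AB * (mrStep S AB).toOuterMeasure E
          = E.indicator (μ c) AB + ((m : ENNReal))⁻¹ * Eᶜ.indicator (μ c) AB := by
        intro AB
        by_cases hAB : μ c AB = 0
        · simp [Set.indicator, hAB]
        · obtain ⟨hAsub, hAcard, hBcard⟩ := hsupp c hc' AB hAB
          have hA : AB.1.Nonempty := by
            rw [← Finset.card_pos, hAcard]; exact hk
          have hBlt : AB.2.card < S := by rw [hBcard]; exact hkcS
          rw [mrStep_measure S i AB hA hBlt, hBcard]
          by_cases hi : i ∈ AB.2
          · have hiE : AB ∈ E := hi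
            rw [if_pos hi, mul_one, Set.indicator_of_mem hiE,
              Set.indicator_of_notMem (by simpa using hiE), mul_zero, add_zero]
          · have hiE : AB ∉ E := hi
            rw [if_neg hi, Set.indicator_of_notMem hiE,
              Set.indicator_of_mem (by simpa using hiE), zero_add, mul_comm]
      rw [tsum_congr hpoint, ENNReal.tsum_add, ENNReal.tsum_mul_left,
        ← PMF.toOuterMeasure_apply, ← PMF.toOuterMeasure_apply]
      have hP := ih hc' i
      have hPle : (μ c).toOuterMeasure E ≠ ⊤ := by
        refine ne_top_of_le_ne_top ENNReal.one_ne_top ?_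
        rw [PMF.toOuterMeasure_apply, ← PMF.tsum_coe (μ c)]
        exact ENNReal.tsum_le_tsum fun x => Set.indicator_apply_le fun _ => le_rfl
      have hcompl : (μ c).toOuterMeasure Eᶜ = 1 - (μ c).toOuterMeasure E := by
        refine (ENNReal.eq_sub_of_add_eq hPle ?_)
        rw [PMF.toOuterMeasure_apply, PMF.toOuterMeasure_apply, ← ENNReal.tsum_add]
        have : ∀ x, Eᶜ.indicator (⇑(μ c)) x + E.indicator (⇑(μ c)) x = μ c x := by
          intro x
          by_cases hx : x ∈ E
          · simp [Set.indicator, hx]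
          · simp [Set.indicator, hx]
        rw [tsum_congr this, PMF.tsum_coe]
      rw [hcompl, hP, hsub (k + c) (le_of_lt hkcS), ← hm]
      -- now: (k+c)/S + m⁻¹ * (m/S) = (k+c+1)/S
      have hmne : (m : ENNReal) ≠ 0 := by
        exact_mod_cast hmpos.ne'
      have hmtop : (m : ENNReal) ≠ ⊤ := ENNReal.natCast_ne_top m
      have : ((m : ENNReal))⁻¹ * ((m : ENNReal) / S) = 1 / S := by
        rw [div_eq_mul_inv, ← mul_assoc, ENNReal.inv_mul_cancel hmne hmtop, one_mul,
          one_div]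
      rw [this, one_div, ← one_div, ENNReal.div_add_div_same]
      congr 1
      push_cast; ring
  intro c hc i
  refine ⟨key c hc i, ?_⟩
  rw [key c hc i, hsub k hkS]
  by_cases hkeq : k = S
  · have hc0 : c = 0 := by omega
    subst hc0
    simp [hkeq]
  · have hSk : 0 < S - k := by omega
    have hane : ((S - k : ℕ) : ENNReal) / S ≠ 0 := by
      simp only [ne_eq, ENNReal.div_eq_zero_iff, not_or]
      exact ⟨by exact_mod_cast hSk.ne', hStop⟩
    have hatop : ((S - k : ℕ) : ENNReal) / S ≠ ⊤ := by
      simp [ENNReal.div_eq_top, hSne, ENNReal.natCast_ne_top]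
    rw [← mul_div_assoc, ENNReal.mul_div_mul_left _ _ hane hatop,
      ENNReal.div_add_div_same]
    congr 1
    push_cast; ring
end
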